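/- Assume that D²_{pp}H(x,p) ≥ (1/C₀)I for all (x,p) and that χ ≥ 0. For (x,t,p,s) ∈ Q̄_T × ℝ^{d+1} set H̃(x,t,p,s) = H(x,p) (so D²_{qq}H̃ = diag(D²_{pp}H(x,p), 0)), and let Ĩ = diag(1,…,1,0) ∈ ℝ^{(d+1)×(d+1)}. Then for every u ∈ C²(Q_T) and every (x,t) ∈ Q_T, writing A = A(x,Du(x,t)) and χ = χ(x,−u_t + H(x,D_xu)), one has tr(D²_{qq}H̃(x,t,Du)·D²u·A·D²u) ≥ (3/(4C₀))|−D_xu_t + D_pH(x,D_xu)·D²_{xx}u|² + (1/(4C₀))·tr(Ĩ·D²u·A·D²u) + (3χ/(4C₀²))|D²_{xx}u|². -/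

import Mathlib

/-! The hypothesis on `D²_{pp}H` is the Loewner inequality `C₀⁻¹ Ĩ ≤ B`, where `B` is
`D²_{pp}H` padded by a zero time row and column. For symmetric `M` and `P ≥ 0` the map
`X ↦ tr (X M P M)` is monotone in the Loewner order, because with `P = R*R` one has
`tr (X M P M) = tr ((R M) X (R M)*)`. Taking `M = D²u` and `P = A = v vᵀ + χ B` with
`v = (D_pH, -1)` gives `tr (B M A M) ≥ C₀⁻¹ (|Ĩ M v|² + χ tr (Ĩ M B M))`; taking `P = Ĩ` gives
`tr (Ĩ M B M) ≥ C₀⁻¹ tr (Ĩ M Ĩ M) = C₀⁻¹ |D²_{xx}u|²`. The claim adds `3χ/(4C₀)` times the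
second inequality to the first. -/

open Real Set

noncomputable section

abbrev Vec (d : ℕ) := Fin d → ℝ

def enorm {d : ℕ} (v : Vec d) : ℝ := Real.sqrt (∑ i, v i ^ 2)

def ev {d : ℕ} (i : Fin d) : Vec d := Pi.single i 1

def dt {d : ℕ} (φ : Vec d × ℝ → ℝ) (z : Vec d × ℝ) : ℝ := fderiv ℝ φ z (0, 1)

def dx {d : ℕ} (φ : Vec d × ℝ → ℝ) (z : Vec d × ℝ) (i : Fin d) : ℝ := fderiv ℝ φ z (ev i, 0)

def Dx {d : ℕ} (φ : Vec d × ℝ → ℝ) (z : Vec d × ℝ) : Vec d := fun i => dx φ z i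

def DpH {d : ℕ} (H : Vec d → Vec d → ℝ) (x p : Vec d) : Vec d := fun i => fderiv ℝ (H x) p (ev i)

def Hpp {d : ℕ} (H : Vec d → Vec d → ℝ) (x p v w : Vec d) : ℝ :=
  fderiv ℝ (fun q => fderiv ℝ (H x) q w) p v

def QT (d : ℕ) (T : ℝ) : Set (Vec d × ℝ) := {z | z.2 ∈ Set.Ioo 0 T}

/-- basis of space-time ℝ^d × ℝ ≅ ℝ^{d+1} -/
def eq1 {d : ℕ} (i : Fin (d + 1)) : Vec d × ℝ :=
  if h : (i : ℕ) < d then (ev ⟨i, h⟩, 0) else (0, 1)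

/-- extension of a d×d matrix by a zero row and column -/
def extMat {d : ℕ} (M : Fin d → Fin d → ℝ) : Matrix (Fin (d + 1)) (Fin (d + 1)) ℝ :=
  Matrix.of fun i j =>
    if hi : (i : ℕ) < d then if hj : (j : ℕ) < d then M ⟨i, hi⟩ ⟨j, hj⟩ else 0 else 0

/-- the vector (D_pH, -1) ∈ ℝ^{d+1} -/
def snocVec {d : ℕ} (v : Vec d) (a : ℝ) : Fin (d + 1) → ℝ := Fin.snoc v a

/-- the coefficient matrix A(x,p,s) = (D_pH,-1)⊗(D_pH,-1) + χ·diag(D²_{pp}H, 0) -/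
def Amat {d : ℕ} (H : Vec d → Vec d → ℝ) (χ : Vec d → ℝ → ℝ) (x : Vec d) (q : Vec d × ℝ) :
    Matrix (Fin (d + 1)) (Fin (d + 1)) ℝ :=
  Matrix.of fun i j =>
    snocVec (DpH H x q.1) (-1) i * snocVec (DpH H x q.1) (-1) j
      + χ x (-q.2 + H x q.1) * extMat (fun a b => Hpp H x q.1 (ev a) (ev b)) i j

/-- the full (d+1)×(d+1) space-time Hessian of u -/
def HessFull {d : ℕ} (u : Vec d × ℝ → ℝ) (z : Vec d × ℝ) :
    Matrix (Fin (d + 1)) (Fin (d + 1)) ℝ :=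
  Matrix.of fun i j => fderiv ℝ (fun z' => fderiv ℝ u z' (eq1 j)) z (eq1 i)

/-- full space-time gradient Du = (D_xu, u_t) as an element of ℝ^d × ℝ -/
def Duq {d : ℕ} (u : Vec d × ℝ → ℝ) (z : Vec d × ℝ) : Vec d × ℝ := (Dx u z, dt u z)

/-- spatial Hessian entries -/
def Hxx {d : ℕ} (u : Vec d × ℝ → ℝ) (z : Vec d × ℝ) (i j : Fin d) : ℝ :=
  fderiv ℝ (fun z' => dx u z' j) z (ev i, 0)

/-- mixed derivative D_x u_t -/
def Dxut {d : ℕ} (u : Vec d × ℝ → ℝ) (z : Vec d × ℝ) (i : Fin d) : ℝ :=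
  fderiv ℝ (fun z' => dt u z') z (ev i, 0)

/-- the matrix Ĩ = diag(1,…,1,0) -/
def Itilde (d : ℕ) : Matrix (Fin (d + 1)) (Fin (d + 1)) ℝ :=
  extMat fun a b => if a = b then (1 : ℝ) else 0



open Matrix
open scoped MatrixOrder ComplexOrder

namespace Matrix

section RCLike

variable {n 𝕜 : Type*} [Fintype n] [RCLike 𝕜]

theorem PosSemidef.trace_mul_mul_mul_nonneg {X P M : Matrix n n 𝕜} (hX : X.PosSemidef)
    (hP : P.PosSemidef) (hM : M.IsHermitian) : 0 ≤ (X * M * P * M).trace := by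
  classical
  obtain ⟨R, rfl⟩ : ∃ R : Matrix n n 𝕜, P = Rᴴ * R :=
    ⟨CFC.sqrt P, by rw [← star_eq_conjTranspose, (CFC.sqrt_nonneg P).isSelfAdjoint.star_eq,
      CFC.sqrt_mul_sqrt_self P hP.nonneg]⟩
  have hcycle : (X * M * (Rᴴ * R) * M).trace = ((R * M) * X * (R * M)ᴴ).trace := by
    rw [conjTranspose_mul, hM.eq,
      show X * M * (Rᴴ * R) * M = X * M * Rᴴ * (R * M) by simp only [Matrix.mul_assoc],
      trace_mul_comm]
    simp only [Matrix.mul_assoc]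
  rw [hcycle]
  exact (hX.mul_mul_conjTranspose_same _).trace_nonneg

theorem trace_mul_mul_mul_le_of_le {X Y P M : Matrix n n 𝕜} (hXY : X ≤ Y)
    (hP : P.PosSemidef) (hM : M.IsHermitian) : (X * M * P * M).trace ≤ (Y * M * P * M).trace := by
  have := (le_iff.mp hXY).trace_mul_mul_mul_nonneg hP hM
  rwa [Matrix.sub_mul, Matrix.sub_mul, Matrix.sub_mul, trace_sub, sub_nonneg] at this

end RCLike

variable {n : Type*} [Fintype n]

theorem trace_mul_mul_vecMulVec_mul {J M : Matrix n n ℝ} (hM : M.IsHermitian) (v : n → ℝ) :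
    (J * M * vecMulVec v v * M).trace = (M *ᵥ v) ⬝ᵥ (J *ᵥ (M *ᵥ v)) := by
  have hMv : v ᵥ* M = M *ᵥ v := by
    rw [← vecMul_transpose, ← conjTranspose_eq_transpose_of_trivial, hM.eq]
  rw [Matrix.mul_assoc, vecMulVec_mul, mul_vecMulVec, trace_vecMulVec, hMv, ← mulVec_mulVec,
    dotProduct_comm]

theorem le_trace_mul_mul_vecMulVec_add_smul_mul {C₀ c : ℝ} (hC₀ : 0 < C₀) (hc : 0 ≤ c)
    {M B J : Matrix n n ℝ}
    (hM : M.IsHermitian) (hJ : J.PosSemidef) (hJB : C₀⁻¹ • J ≤ B) (v : n → ℝ) :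
    3 / (4 * C₀) * ((M *ᵥ v) ⬝ᵥ (J *ᵥ (M *ᵥ v)))
      + 1 / (4 * C₀) * (J * M * (vecMulVec v v + c • B) * M).trace
      + 3 * c / (4 * C₀ ^ 2) * (J * M * J * M).trace
    ≤ (B * M * (vecMulVec v v + c • B) * M).trace := by
  have hB : B.PosSemidef := by
    simpa using (le_iff.mp hJB).add (hJ.smul (inv_nonneg.2 hC₀.le))
  set P := vecMulVec v v + c • B
  have hP : P.PosSemidef := by
    simpa using (posSemidef_vecMulVec_self_star v).add (hB.smul hc)
  have hcoupled : C₀⁻¹ * (J * M * P * M).trace ≤ (B * M * P * M).trace := by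
    simpa [Matrix.smul_mul, trace_smul] using trace_mul_mul_mul_le_of_le hJB hP hM
  have hspatial : C₀⁻¹ * (J * M * J * M).trace ≤ (J * M * B * M).trace := by
    have h := trace_mul_mul_mul_le_of_le hJB hJ hM
    rwa [Matrix.smul_mul, Matrix.smul_mul, Matrix.smul_mul, trace_smul, smul_eq_mul,
      show B * M * J * M = B * M * (J * M) by simp only [Matrix.mul_assoc], trace_mul_comm (B * M),
      show J * M * (B * M) = J * M * B * M by simp only [Matrix.mul_assoc]] at h
  have hsplit : (J * M * P * M).trace
      = (M *ᵥ v) ⬝ᵥ (J *ᵥ (M *ᵥ v)) + c * (J * M * B * M).trace := by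
    simp only [P, Matrix.mul_add, Matrix.add_mul, Matrix.mul_smul, Matrix.smul_mul, trace_add,
      trace_smul, smul_eq_mul, trace_mul_mul_vecMulVec_mul hM]
  rw [hsplit] at hcoupled ⊢
  linear_combination hcoupled + (3 * c / (4 * C₀)) * hspatial

end Matrix

theorem ContinuousLinearMap.dotProduct_mulVec_single_single {ι : Type*} [Fintype ι]
    [DecidableEq ι] (β : (ι → ℝ) →L[ℝ] (ι → ℝ) →L[ℝ] ℝ) (y : ι → ℝ) :
    y ⬝ᵥ (Matrix.of fun a b => β (Pi.single a 1) (Pi.single b 1)) *ᵥ y = β y y := by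
  have hy : y = ∑ a, y a • (Pi.single a 1 : ι → ℝ) := by
    simp [← Pi.single_smul', Finset.univ_sum_single]
  conv_rhs => rw [hy]
  simp only [map_sum, map_smul, _root_.sum_apply, _root_.smul_apply, dotProduct, mulVec,
    Matrix.of_apply, Finset.mul_sum, smul_eq_mul]
  rw [Finset.sum_comm]
  exact Finset.sum_congr rfl fun a _ => Finset.sum_congr rfl fun b _ => by ring

theorem fderiv_fderiv_apply {𝕜 E F : Type*} [NontriviallyNormedField 𝕜] [NormedAddCommGroup E]
    [NormedSpace 𝕜 E] [NormedAddCommGroup F] [NormedSpace 𝕜 F] {f : E → F} {x : E}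
    (hf : DifferentiableAt 𝕜 (fderiv 𝕜 f) x) (v w : E) :
    fderiv 𝕜 (fun y => fderiv 𝕜 f y w) x v = fderiv 𝕜 (fderiv 𝕜 f) x v w := by
  rw [fderiv_clm_apply hf (differentiableAt_const w)]
  simp

section extMat

variable {d : ℕ}

@[simp]
theorem extMat_castSucc_castSucc (M : Fin d → Fin d → ℝ) (a b : Fin d) :
    extMat M a.castSucc b.castSucc = M a b := by
  simp [extMat]

@[simp]
theorem extMat_last_left (M : Fin d → Fin d → ℝ) (j : Fin (d + 1)) :
    extMat M (Fin.last d) j = 0 := by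
  simp [extMat]

@[simp]
theorem extMat_last_right (M : Fin d → Fin d → ℝ) (i : Fin (d + 1)) :
    extMat M i (Fin.last d) = 0 := by
  simp [extMat]

theorem isHermitian_extMat {M : Fin d → Fin d → ℝ} (hM : ∀ a b, M a b = M b a) :
    (extMat M).IsHermitian := by
  ext i j
  induction i using Fin.lastCases <;> induction j using Fin.lastCases <;> simp [hM]

theorem dotProduct_extMat_mulVec (M : Fin d → Fin d → ℝ) (y : Fin (d + 1) → ℝ) :
    y ⬝ᵥ extMat M *ᵥ y = (y ∘ Fin.castSucc) ⬝ᵥ Matrix.of M *ᵥ (y ∘ Fin.castSucc) := by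
  simp [dotProduct, mulVec, Fin.sum_univ_castSucc]

theorem dotProduct_Itilde_mulVec (y : Fin (d + 1) → ℝ) :
    y ⬝ᵥ Itilde d *ᵥ y = ∑ a : Fin d, y a.castSucc ^ 2 := by
  rw [Itilde, dotProduct_extMat_mulVec]
  simp [dotProduct, mulVec, sq]

theorem posSemidef_Itilde : (Itilde d).PosSemidef :=
  .of_dotProduct_mulVec_nonneg (isHermitian_extMat fun _ _ => by simp [eq_comm]) fun y => by
    simpa [dotProduct_Itilde_mulVec] using
      Finset.sum_nonneg fun (a : Fin d) _ => sq_nonneg (y a.castSucc)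

theorem trace_Itilde_mul_mul_Itilde_mul (M N : Matrix (Fin (d + 1)) (Fin (d + 1)) ℝ) :
    (Itilde d * M * Itilde d * N).trace
      = ∑ a : Fin d, ∑ b : Fin d, M a.castSucc b.castSucc * N b.castSucc a.castSucc := by
  simp [Itilde, trace, mul_apply, Fin.sum_univ_castSucc]

end extMat

section SpaceTime

variable {d : ℕ} {u : Vec d × ℝ → ℝ} {z : Vec d × ℝ}

theorem isOpen_QT (T : ℝ) : IsOpen (QT d T) :=
  isOpen_Ioo.preimage continuous_snd

@[simp]
theorem eq1_castSucc (i : Fin d) : eq1 i.castSucc = (ev i, 0) := by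
  simp [eq1]

@[simp]
theorem eq1_last : eq1 (Fin.last d) = (0, 1) := by
  simp [eq1]

theorem HessFull_apply (hu : DifferentiableAt ℝ (fderiv ℝ u) z) (i j : Fin (d + 1)) :
    HessFull u z i j = fderiv ℝ (fderiv ℝ u) z (eq1 i) (eq1 j) :=
  fderiv_fderiv_apply hu _ _

theorem isHermitian_HessFull (hu : ContDiffAt ℝ 2 u z) :
    (HessFull u z).IsHermitian := by
  have hdu : DifferentiableAt ℝ (fderiv ℝ u) z :=
    (hu.fderiv_right le_rfl).differentiableAt one_ne_zero
  ext i j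
  simp only [conjTranspose_apply, star_trivial, HessFull_apply hdu]
  exact hu.isSymmSndFDerivAt (by simp) _ _

theorem Hxx_eq_HessFull (i j : Fin d) :
    Hxx u z i j = HessFull u z i.castSucc j.castSucc := by
  simp [Hxx, HessFull, dx]

theorem Dxut_eq_HessFull (i : Fin d) :
    Dxut u z i = HessFull u z i.castSucc (Fin.last d) := by
  simp [Dxut, HessFull, dt]


theorem sum_sq_Hxx_eq_trace (hu : ContDiffAt ℝ 2 u z) :
    ∑ i, ∑ j, Hxx u z i j ^ 2 = (Itilde d * HessFull u z * Itilde d * HessFull u z).trace := by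
  have hsymm := (isHermitian_HessFull hu).apply
  simp only [star_trivial] at hsymm
  simp [trace_Itilde_mul_mul_Itilde_mul, Hxx_eq_HessFull, sq, hsymm]

theorem sum_sq_neg_Dxut_add_eq_dotProduct (hu : ContDiffAt ℝ 2 u z) (w : Vec d) :
    ∑ i, (-(Dxut u z i) + ∑ j, w j * Hxx u z j i) ^ 2
      = (HessFull u z *ᵥ snocVec w (-1)) ⬝ᵥ Itilde d *ᵥ (HessFull u z *ᵥ snocVec w (-1)) := by
  have hsymm := (isHermitian_HessFull hu).apply
  simp only [star_trivial] at hsymm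
  rw [dotProduct_Itilde_mulVec]
  refine Finset.sum_congr rfl fun i _ => ?_
  simp [mulVec, dotProduct, Fin.sum_univ_castSucc, snocVec, Dxut_eq_HessFull, Hxx_eq_HessFull,
    hsymm, mul_comm, add_comm]

end SpaceTime

section Hamiltonian

variable {d : ℕ} {H : Vec d → Vec d → ℝ} {x : Vec d}

theorem Hpp_eq_fderiv_fderiv (hH : ContDiff ℝ 2 (H x)) (p v w : Vec d) :
    Hpp H x p v w = fderiv ℝ (fderiv ℝ (H x)) p v w :=
  fderiv_fderiv_apply ((hH.fderiv_right le_rfl).differentiable one_ne_zero p) v w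

theorem inv_smul_Itilde_le_extMat_Hpp {C₀ : ℝ} {p : Vec d} (hH : ContDiff ℝ 2 (H x))
    (hHpp : ∀ v, (1 / C₀) * ∑ i, v i ^ 2 ≤ Hpp H x p v v) :
    C₀⁻¹ • Itilde d ≤ extMat fun a b => Hpp H x p (ev a) (ev b) := by
  have hsymm : ∀ a b, Hpp H x p (ev a) (ev b) = Hpp H x p (ev b) (ev a) := fun a b => by
    simp only [Hpp_eq_fderiv_fderiv hH]
    exact hH.contDiffAt.isSymmSndFDerivAt (by simp) _ _
  refine le_iff.mpr (.of_dotProduct_mulVec_nonneg ?_ fun y => ?_)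
  · exact (isHermitian_extMat hsymm).sub (posSemidef_Itilde.isHermitian.smul (.all _))
  · have hquad : (y ∘ Fin.castSucc) ⬝ᵥ Matrix.of (fun a b => Hpp H x p (ev a) (ev b))
          *ᵥ (y ∘ Fin.castSucc) = Hpp H x p (y ∘ Fin.castSucc) (y ∘ Fin.castSucc) := by
      simp only [Hpp_eq_fderiv_fderiv hH, ev]
      exact ContinuousLinearMap.dotProduct_mulVec_single_single _ _
    rw [star_trivial, sub_mulVec, dotProduct_sub, smul_mulVec, dotProduct_smul,
      dotProduct_extMat_mulVec, dotProduct_Itilde_mulVec, hquad, sub_nonneg, smul_eq_mul]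
    simpa using hHpp (y ∘ Fin.castSucc)

theorem Amat_eq (χ : Vec d → ℝ → ℝ) (q : Vec d × ℝ) :
    Amat H χ x q = vecMulVec (snocVec (DpH H x q.1) (-1)) (snocVec (DpH H x q.1) (-1))
      + χ x (-q.2 + H x q.1) • extMat fun a b => Hpp H x q.1 (ev a) (ev b) := by
  ext i j
  simp [Amat, vecMulVec_apply]

end Hamiltonian

theorem stmt4_general (d : ℕ) (T C₀ : ℝ) (hC₀ : 0 < C₀)
    (H : Vec d → Vec d → ℝ) (χ : Vec d → ℝ → ℝ)
    (hH : ∀ x, ContDiff ℝ 2 (H x))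
    (hHpp : ∀ x p v, (1 / C₀) * ∑ i, v i ^ 2 ≤ Hpp H x p v v)
    (hχ : ∀ x w, 0 ≤ χ x w)
    (u : Vec d × ℝ → ℝ) (hu : ContDiffOn ℝ 2 u (QT d T)) :
    ∀ z ∈ QT d T,
      (3 / (4 * C₀)) *
          (∑ i, (-(Dxut u z i) + ∑ j, DpH H z.1 (Dx u z) j * Hxx u z j i) ^ 2)
        + (1 / (4 * C₀)) *
            Matrix.trace (Itilde d * HessFull u z * Amat H χ z.1 (Duq u z) * HessFull u z)
        + (3 * χ z.1 (-(dt u z) + H z.1 (Dx u z)) / (4 * C₀ ^ 2)) *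
            (∑ i, ∑ j, Hxx u z i j ^ 2)
      ≤ Matrix.trace
          (extMat (fun a b => Hpp H z.1 (Dx u z) (ev a) (ev b)) * HessFull u z
            * Amat H χ z.1 (Duq u z) * HessFull u z) := by
  intro z hz
  have hu₂ : ContDiffAt ℝ 2 u z := hu.contDiffAt ((isOpen_QT T).mem_nhds hz)
  rw [Amat_eq, sum_sq_neg_Dxut_add_eq_dotProduct hu₂, sum_sq_Hxx_eq_trace hu₂]
  exact le_trace_mul_mul_vecMulVec_add_smul_mul hC₀ (hχ _ _) (isHermitian_HessFull hu₂)
    posSemidef_Itilde (inv_smul_Itilde_le_extMat_Hpp (hH z.1) (hHpp z.1 (Dx u z))) _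

/-- Lemma 3.7: the key trace inequality. -/
theorem stmt4 (d : ℕ) (T C₀ : ℝ) (hd : 0 < d) (hT : 0 < T) (hC₀ : 0 < C₀)
    (H : Vec d → Vec d → ℝ) (χ : Vec d → ℝ → ℝ)
    (hH : ∀ x, ContDiff ℝ 2 (H x))
    (hHpp : ∀ x p v, (1 / C₀) * ∑ i, v i ^ 2 ≤ Hpp H x p v v)
    (hχ : ∀ x w, 0 ≤ χ x w)
    (u : Vec d × ℝ → ℝ) (hu : ContDiffOn ℝ 2 u (QT d T)) :
    ∀ z ∈ QT d T,
      (3 / (4 * C₀)) *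
          (∑ i, (-(Dxut u z i) + ∑ j, DpH H z.1 (Dx u z) j * Hxx u z j i) ^ 2)
        + (1 / (4 * C₀)) *
            Matrix.trace (Itilde d * HessFull u z * Amat H χ z.1 (Duq u z) * HessFull u z)
        + (3 * χ z.1 (-(dt u z) + H z.1 (Dx u z)) / (4 * C₀ ^ 2)) *
            (∑ i, ∑ j, Hxx u z i j ^ 2)
      ≤ Matrix.trace
          (extMat (fun a b => Hpp H z.1 (Dx u z) (ev a) (ev b)) * HessFull u z
            * Amat H χ z.1 (Duq u z) * HessFull u z) :=
  stmt4_general d T C₀ hC₀ H χ hH hHpp hχ u hu
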